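/- Let Y be a Banach space, ω ∈ ℕ, c ∈ ℂ \ {0}, A : ℤ → L(Y) with A(k+ω) = A(k) for all k ∈ ℤ, ‖A(k)‖ ≤ c₀(k) with c₀(k+ω) = c₀(k) > 0 and ∑_{v=1}^{∞} c₀(k−v)⋯c₀(k−1) < ∞ for all k. If f : ℤ → Y is (ω,c)-periodic, then the sequence x(k) := f(k−1) + ∑_{j=−∞}^{k−2} A(k−1)⋯A(j+1) f(j) is (ω,c)-periodic and solves x(k+1) = A(k)x(k) + f(k) for all k ∈ ℤ. -/

import Mathlib

/-!
The series `x(k) = ∑_{v ≥ 0} A(k-1)⋯A(k-v) f(k-1-v)` converges absolutely, being dominated by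
`sup ‖f‖ · ∑_v c₀(k-1)⋯c₀(k-v)`. Shifting `k` by the period `ω` leaves the operator products
unchanged and multiplies every value of `f` by `c`, so `x(k+ω) = c x(k)`. Shifting `k` by one
turns the `(v+1)`-st term of `x(k+1)` into `A(k)` applied to the `v`-th term of `x(k)`, while the
`0`-th term of `x(k+1)` is `f(k)`; this is the recursion `x(k+1) = A(k) x(k) + f(k)`.
-/

open scoped BigOperators

/-- `opProd A k v = A(k-1) ∘ A(k-2) ∘ ⋯ ∘ A(k-v)`. -/
def opProd {Y : Type*} [NormedAddCommGroup Y] [NormedSpace ℂ Y]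
    (A : ℤ → Y →L[ℂ] Y) (k : ℤ) : ℕ → (Y →L[ℂ] Y)
  | 0 => 1
  | v + 1 => opProd A k v ∘L A (k - ((v : ℤ) + 1))

namespace opProd

variable {Y : Type*} [NormedAddCommGroup Y] [NormedSpace ℂ Y] (A : ℤ → Y →L[ℂ] Y)

theorem norm_le_prod {c₀ : ℤ → ℝ} (hAc : ∀ k, ‖A k‖ ≤ c₀ k) (k : ℤ) :
    ∀ v : ℕ, ‖opProd A k v‖ ≤ ∏ i ∈ Finset.range v, c₀ (k - 1 - (i : ℤ))
  | 0 => ContinuousLinearMap.norm_id_le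
  | v + 1 => by
    have hc₀ : ∀ k, 0 ≤ c₀ k := fun k => (norm_nonneg _).trans (hAc k)
    rw [opProd, Finset.prod_range_succ]
    calc ‖opProd A k v ∘L A (k - ((v : ℤ) + 1))‖
        ≤ ‖opProd A k v‖ * ‖A (k - ((v : ℤ) + 1))‖ := ContinuousLinearMap.opNorm_comp_le _ _
      _ ≤ (∏ i ∈ Finset.range v, c₀ (k - 1 - (i : ℤ))) * c₀ (k - 1 - (v : ℤ)) := by
        refine mul_le_mul (norm_le_prod hAc k v) ?_ (norm_nonneg _)
          (Finset.prod_nonneg fun i _ => hc₀ _)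
        rw [sub_sub, add_comm 1]
        exact hAc _

theorem add_period {T : ℤ} (hA : ∀ k, A (k + T) = A k) (k : ℤ) :
    ∀ v : ℕ, opProd A (k + T) v = opProd A k v
  | 0 => rfl
  | v + 1 => by
    rw [opProd, opProd, add_period hA k v, add_sub_right_comm, hA]

theorem add_one_succ (k : ℤ) : ∀ v : ℕ, opProd A (k + 1) (v + 1) = A k ∘L opProd A k v
  | 0 => by
    ext y
    simp [opProd]
  | v + 1 => by
    rw [opProd, add_one_succ k v, ContinuousLinearMap.comp_assoc, opProd]
    congr 3
    push_cast
    ring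

end opProd

section VariationOfConstants

variable {Y : Type*} [NormedAddCommGroup Y] [NormedSpace ℂ Y]

/-- The discrete variation-of-constants formula
`x(k) = ∑_{j ≤ k-1} A(k-1)⋯A(j+1) f(j)`, indexed by `v = k - 1 - j`. -/
noncomputable def variationOfConstants (A : ℤ → Y →L[ℂ] Y) (f : ℤ → Y) (k : ℤ) : Y :=
  ∑' v : ℕ, opProd A k v (f (k - 1 - v))

theorem summable_opProd_apply [CompleteSpace Y] {A : ℤ → Y →L[ℂ] Y} {c₀ : ℤ → ℝ}
    (hAc : ∀ k, ‖A k‖ ≤ c₀ k) {k : ℤ}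
    (hsum : Summable fun v : ℕ => ∏ i ∈ Finset.range v, c₀ (k - 1 - (i : ℤ)))
    {f : ℤ → Y} {M : ℝ} (hM : ∀ j, ‖f j‖ ≤ M) :
    Summable fun v : ℕ => opProd A k v (f (k - 1 - v)) := by
  refine (hsum.mul_right M).of_norm_bounded fun v => ?_
  calc ‖opProd A k v (f (k - 1 - v))‖ ≤ ‖opProd A k v‖ * ‖f (k - 1 - v)‖ :=
        (opProd A k v).le_opNorm _
    _ ≤ (∏ i ∈ Finset.range v, c₀ (k - 1 - (i : ℤ))) * M :=
        mul_le_mul (opProd.norm_le_prod A hAc k v) (hM _) (norm_nonneg _)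
          ((norm_nonneg _).trans (opProd.norm_le_prod A hAc k v))

theorem variationOfConstants_eq_add_tsum {A : ℤ → Y →L[ℂ] Y} {f : ℤ → Y} {k : ℤ}
    (hS : Summable fun v : ℕ => opProd A k v (f (k - 1 - v))) :
    variationOfConstants A f k
      = f (k - 1) + ∑' v : ℕ, opProd A k (v + 1) (f (k - 1 - ((v : ℤ) + 1))) := by
  rw [variationOfConstants, hS.tsum_eq_zero_add]
  simp [opProd]

theorem variationOfConstants_add_period {A : ℤ → Y →L[ℂ] Y} {f : ℤ → Y} {T : ℤ} {c : ℂ}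
    (hA : ∀ k, A (k + T) = A k) (hf : ∀ k, f (k + T) = c • f k) (k : ℤ) :
    variationOfConstants A f (k + T) = c • variationOfConstants A f k := by
  rw [variationOfConstants, variationOfConstants, ← tsum_const_smul'']
  congr 1 with v
  rw [opProd.add_period A hA, show k + T - 1 - v = k - 1 - v + T by ring, hf, map_smul]

theorem variationOfConstants_add_one {A : ℤ → Y →L[ℂ] Y} {f : ℤ → Y} {k : ℤ}
    (hS : Summable fun v : ℕ => opProd A k v (f (k - 1 - v))) :
    variationOfConstants A f (k + 1) = A k (variationOfConstants A f k) + f k := by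
  have hterm : ∀ v : ℕ, opProd A (k + 1) (v + 1) (f (k + 1 - 1 - (v + 1 : ℕ)))
      = A k (opProd A k v (f (k - 1 - v))) := fun v => by
    rw [opProd.add_one_succ, show k + 1 - 1 - ((v + 1 : ℕ) : ℤ) = k - 1 - v by push_cast; ring]
    rfl
  rw [variationOfConstants, tsum_eq_zero_add' (by simpa only [hterm] using hS.mapL (A k)),
    variationOfConstants, (A k).map_tsum hS]
  simp only [hterm]
  simp [opProd, add_comm]

end VariationOfConstants

theorem stmt7_general {Y : Type*} [NormedAddCommGroup Y] [NormedSpace ℂ Y] [CompleteSpace Y]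
    (ω : ℕ) (c : ℂ)
    (A : ℤ → Y →L[ℂ] Y) (hAper : ∀ k : ℤ, A (k + ω) = A k)
    (c₀ : ℤ → ℝ) (hAc : ∀ k, ‖A k‖ ≤ c₀ k)
    (hsum : ∀ k : ℤ, Summable (fun v : ℕ => ∏ i ∈ Finset.range (v + 1), c₀ (k - 1 - (i : ℤ))))
    (f : ℤ → Y) (hfper : ∀ k : ℤ, f (k + ω) = c • f k) (hfb : ∃ M : ℝ, ∀ k : ℤ, ‖f k‖ ≤ M) :
    (∀ k : ℤ,
      (fun m : ℤ => f (m - 1) + ∑' v : ℕ, opProd A m (v + 1) (f (m - 1 - ((v : ℤ) + 1)))) (k + ω)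
        = c • (fun m : ℤ =>
            f (m - 1) + ∑' v : ℕ, opProd A m (v + 1) (f (m - 1 - ((v : ℤ) + 1)))) k) ∧
    (∀ k : ℤ,
      (fun m : ℤ => f (m - 1) + ∑' v : ℕ, opProd A m (v + 1) (f (m - 1 - ((v : ℤ) + 1)))) (k + 1)
        = A k ((fun m : ℤ =>
            f (m - 1) + ∑' v : ℕ, opProd A m (v + 1) (f (m - 1 - ((v : ℤ) + 1)))) k) + f k) := by
  obtain ⟨M, hM⟩ := hfb
  have hS : ∀ k : ℤ, Summable fun v : ℕ => opProd A k v (f (k - 1 - v)) := fun k =>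
    summable_opProd_apply hAc ((summable_nat_add_iff 1).mp (hsum k)) hM
  simp only [← variationOfConstants_eq_add_tsum (hS _)]
  exact ⟨variationOfConstants_add_period hAper hfper, fun k => variationOfConstants_add_one (hS k)⟩

/-- If `A` is `ω`-periodic, `‖A k‖ ≤ c₀ k` with `c₀` `ω`-periodic and
`∑_{v≥1} c₀(k−v)⋯c₀(k−1) < ∞`, and `f` is a bounded `(ω,c)`-periodic sequence, then
`x(k) = f(k−1) + ∑_{v=1}^∞ A(k−1)⋯A(k−v) f(k−1−v)` is an `(ω,c)`-periodic solution of
`x(k+1) = A(k) x(k) + f(k)`. -/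
theorem stmt7 {Y : Type*} [NormedAddCommGroup Y] [NormedSpace ℂ Y] [CompleteSpace Y]
    (ω : ℕ) (hω : 0 < ω) (c : ℂ) (hc : c ≠ 0)
    (A : ℤ → Y →L[ℂ] Y) (hAper : ∀ k : ℤ, A (k + ω) = A k)
    (c₀ : ℤ → ℝ) (hc₀pos : ∀ k, 0 < c₀ k) (hAc : ∀ k, ‖A k‖ ≤ c₀ k)
    (hc₀per : ∀ k : ℤ, c₀ (k + ω) = c₀ k)
    (hsum : ∀ k : ℤ, Summable (fun v : ℕ => ∏ i ∈ Finset.range (v + 1), c₀ (k - 1 - (i : ℤ))))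
    (f : ℤ → Y) (hfper : ∀ k : ℤ, f (k + ω) = c • f k) (hfb : ∃ M : ℝ, ∀ k : ℤ, ‖f k‖ ≤ M) :
    (∀ k : ℤ,
      (fun m : ℤ => f (m - 1) + ∑' v : ℕ, opProd A m (v + 1) (f (m - 1 - ((v : ℤ) + 1)))) (k + ω)
        = c • (fun m : ℤ =>
            f (m - 1) + ∑' v : ℕ, opProd A m (v + 1) (f (m - 1 - ((v : ℤ) + 1)))) k) ∧
    (∀ k : ℤ,
      (fun m : ℤ => f (m - 1) + ∑' v : ℕ, opProd A m (v + 1) (f (m - 1 - ((v : ℤ) + 1)))) (k + 1)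
        = A k ((fun m : ℤ =>
            f (m - 1) + ∑' v : ℕ, opProd A m (v + 1) (f (m - 1 - ((v : ℤ) + 1)))) k) + f k) :=
  stmt7_general ω c A hAper c₀ hAc hsum f hfper hfb
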